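/- Let λ > 0 and suppose (A,B) is a fixed point of the softImpute-ALS updates, i.e., A ∈ argmin_{Z₁} Q_A(Z₁|A,B) and B ∈ argmin_{Z₂} Q_B(Z₂|A,B). Then (A,B) satisfies the first-order stationarity conditions P_Ω(ABᵀ − X)B + λA = 0 and Aᵀ P_Ω(ABᵀ − X) + λBᵀ = 0; that is, ∇_A F(A,B) = 0 and ∇_B F(A,B) = 0. -/
import Mathlib


noncomputable section

open Matrix Filter

/-- Squared Frobenius norm of a real matrix. -/
def frobSq {m n : ℕ} (M : Matrix (Fin m) (Fin n) ℝ) : ℝ := ∑ i, ∑ j, (M i j) ^ 2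

/-- `P_Ω`: keep the entries in `Ω`, zero out the rest. -/
def proj {m n : ℕ} (Ω : Finset (Fin m × Fin n)) (Y : Matrix (Fin m) (Fin n) ℝ) :
    Matrix (Fin m) (Fin n) ℝ := Matrix.of fun i j => if (i, j) ∈ Ω then Y i j else 0

/-- `P_Ω^⊥`: zero out the entries in `Ω`, keep the rest. -/
def projPerp {m n : ℕ} (Ω : Finset (Fin m × Fin n)) (Y : Matrix (Fin m) (Fin n) ℝ) :
    Matrix (Fin m) (Fin n) ℝ := Matrix.of fun i j => if (i, j) ∈ Ω then 0 else Y i j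

/-- `F(A,B) = (1/2)‖P_Ω(X − ABᵀ)‖_F² + (λ/2)(‖A‖_F² + ‖B‖_F²)`. -/
def Fobj {m n r : ℕ} (Ω : Finset (Fin m × Fin n)) (X : Matrix (Fin m) (Fin n) ℝ) (lam : ℝ)
    (A : Matrix (Fin m) (Fin r) ℝ) (B : Matrix (Fin n) (Fin r) ℝ) : ℝ :=
  (1 / 2) * frobSq (proj Ω (X - A * Bᵀ)) + (lam / 2) * (frobSq A + frobSq B)

/-- `Q_A(Z₁|A,B)`. -/
def QA {m n r : ℕ} (Ω : Finset (Fin m × Fin n)) (X : Matrix (Fin m) (Fin n) ℝ) (lam : ℝ)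
    (Z₁ : Matrix (Fin m) (Fin r) ℝ) (A : Matrix (Fin m) (Fin r) ℝ)
    (B : Matrix (Fin n) (Fin r) ℝ) : ℝ :=
  (1 / 2) * frobSq (proj Ω (X - Z₁ * Bᵀ) + projPerp Ω (A * Bᵀ - Z₁ * Bᵀ)) +
    (lam / 2) * frobSq Z₁ + (lam / 2) * frobSq B

/-- `Q_B(Z₂|A,B)`. -/
def QB {m n r : ℕ} (Ω : Finset (Fin m × Fin n)) (X : Matrix (Fin m) (Fin n) ℝ) (lam : ℝ)
    (Z₂ : Matrix (Fin n) (Fin r) ℝ) (A : Matrix (Fin m) (Fin r) ℝ)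
    (B : Matrix (Fin n) (Fin r) ℝ) : ℝ :=
  (1 / 2) * frobSq (proj Ω (X - A * Z₂ᵀ) + projPerp Ω (A * Bᵀ - A * Z₂ᵀ)) +
    (lam / 2) * frobSq A + (lam / 2) * frobSq Z₂

/-- `(A_k, B_k)` are softImpute-ALS iterates: `A_{k+1} ∈ argmin Q_A(·|A_k,B_k)` and
`B_{k+1} ∈ argmin Q_B(·|A_{k+1},B_k)`. -/
def SoftImputeALS {m n r : ℕ} (Ω : Finset (Fin m × Fin n)) (X : Matrix (Fin m) (Fin n) ℝ)
    (lam : ℝ) (A : ℕ → Matrix (Fin m) (Fin r) ℝ) (B : ℕ → Matrix (Fin n) (Fin r) ℝ) : Prop :=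
  ∀ k : ℕ,
    (∀ Z₁ : Matrix (Fin m) (Fin r) ℝ,
      QA Ω X lam (A (k + 1)) (A k) (B k) ≤ QA Ω X lam Z₁ (A k) (B k)) ∧
    (∀ Z₂ : Matrix (Fin n) (Fin r) ℝ,
      QB Ω X lam (B (k + 1)) (A (k + 1)) (B k) ≤ QB Ω X lam Z₂ (A (k + 1)) (B k))


section Aux

open Matrix

/-- Frobenius inner product. -/
def frInner {m n : ℕ} (M N : Matrix (Fin m) (Fin n) ℝ) : ℝ := ∑ i, ∑ j, M i j * N i j

lemma frobSq_nonneg {m n : ℕ} (M : Matrix (Fin m) (Fin n) ℝ) : 0 ≤ frobSq M :=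
  Finset.sum_nonneg fun i _ => Finset.sum_nonneg fun j _ => sq_nonneg _

lemma frobSq_add_smul {m n : ℕ} (M N : Matrix (Fin m) (Fin n) ℝ) (t : ℝ) :
    frobSq (M + t • N) = frobSq M + 2 * t * frInner M N + t ^ 2 * frobSq N := by
  simp only [frobSq, frInner, Matrix.add_apply, Matrix.smul_apply, smul_eq_mul,
    Finset.mul_sum, ← Finset.sum_add_distrib]
  apply Finset.sum_congr rfl; intro i _
  apply Finset.sum_congr rfl; intro j _
  ring

lemma frInner_self {m n : ℕ} (M : Matrix (Fin m) (Fin n) ℝ) : frInner M M = frobSq M := by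
  simp [frInner, frobSq, sq]

lemma eq_of_frInner_eq {m n : ℕ} {M N : Matrix (Fin m) (Fin n) ℝ}
    (h : ∀ D : Matrix (Fin m) (Fin n) ℝ, frInner M D = frInner N D) : M = N := by
  have h2 := h (M - N)
  have hz0 : frInner (M - N) (M - N) = 0 := by
    simp only [frInner, Matrix.sub_apply] at h2 ⊢
    simp only [sub_mul, Finset.sum_sub_distrib]
    linarith
  rw [frInner_self] at hz0
  ext i j
  have hnn : ∀ p ∈ (Finset.univ : Finset (Fin m)), (0:ℝ) ≤ ∑ q, ((M - N) p q)^2 :=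
    fun p _ => Finset.sum_nonneg fun q _ => sq_nonneg _
  have hrow : ∑ q, ((M - N) i q)^2 = 0 :=
    (Finset.sum_eq_zero_iff_of_nonneg hnn).mp hz0 i (Finset.mem_univ i)
  have hentry := (Finset.sum_eq_zero_iff_of_nonneg
    (fun q _ => sq_nonneg ((M-N) i q))).mp hrow j (Finset.mem_univ j)
  have hz : (M - N) i j = 0 := pow_eq_zero_iff (n := 2) (by norm_num) |>.mp hentry
  simpa [Matrix.sub_apply, sub_eq_zero] using hz

lemma quad_coeff (a b : ℝ) (ha : 0 ≤ a) (h : ∀ t : ℝ, 0 ≤ a * t ^ 2 + b * t) : b = 0 := by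
  by_contra hb
  have h1 := h (-b / (a + 1))
  have ha1 : (0:ℝ) < a + 1 := by linarith
  have hb2 : 0 < b ^ 2 := by positivity
  have key : a * (-b / (a + 1)) ^ 2 + b * (-b / (a + 1)) = -(b^2) / (a+1)^2 := by
    field_simp
    ring
  rw [key] at h1
  have hpos : (0:ℝ) < b^2 / (a+1)^2 := by positivity
  rw [neg_div] at h1
  linarith

lemma frInner_mul_right {m n r : ℕ} (R : Matrix (Fin m) (Fin n) ℝ)
    (D : Matrix (Fin m) (Fin r) ℝ) (B : Matrix (Fin n) (Fin r) ℝ) :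
    frInner R (D * Bᵀ) = frInner (R * B) D := by
  simp only [frInner, Matrix.mul_apply, Matrix.transpose_apply, Finset.mul_sum,
    Finset.sum_mul]
  apply Finset.sum_congr rfl; intro i _
  rw [Finset.sum_comm]
  apply Finset.sum_congr rfl; intro k _
  apply Finset.sum_congr rfl; intro j _
  ring

lemma frInner_mul_left {m n r : ℕ} (R : Matrix (Fin m) (Fin n) ℝ)
    (A : Matrix (Fin m) (Fin r) ℝ) (D : Matrix (Fin n) (Fin r) ℝ) :
    frInner R (A * Dᵀ) = frInner (Rᵀ * A) D := by
  simp only [frInner, Matrix.mul_apply, Matrix.transpose_apply, Finset.mul_sum,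
    Finset.sum_mul]
  rw [Finset.sum_comm]
  apply Finset.sum_congr rfl; intro j _
  rw [Finset.sum_comm]
  apply Finset.sum_congr rfl; intro k _
  apply Finset.sum_congr rfl; intro i _
  ring

lemma frInner_smul_left {m n : ℕ} (c : ℝ) (M D : Matrix (Fin m) (Fin n) ℝ) :
    frInner (c • M) D = c * frInner M D := by
  simp only [frInner, Matrix.smul_apply, smul_eq_mul, Finset.mul_sum]
  apply Finset.sum_congr rfl; intro i _
  apply Finset.sum_congr rfl; intro j _
  ring

lemma resid_shift {m n : ℕ} (Ω : Finset (Fin m × Fin n)) (Y M : Matrix (Fin m) (Fin n) ℝ)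
    (t : ℝ) :
    proj Ω (Y - t • M) + projPerp Ω (-(t • M)) = proj Ω Y + (-t) • M := by
  ext i j
  by_cases h : (i, j) ∈ Ω <;>
    simp [proj, projPerp, h, Matrix.sub_apply, Matrix.smul_apply, Matrix.neg_apply] <;> ring

lemma projPerp_zero {m n : ℕ} (Ω : Finset (Fin m × Fin n)) : projPerp Ω (0 : Matrix (Fin m) (Fin n) ℝ) = 0 := by
  ext i j; simp [projPerp]

lemma proj_neg {m n : ℕ} (Ω : Finset (Fin m × Fin n)) (Y : Matrix (Fin m) (Fin n) ℝ) :
    proj Ω (-Y) = -proj Ω Y := by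
  ext i j
  by_cases h : (i, j) ∈ Ω <;> simp [proj, h]

end Aux

theorem fixed_point_is_stationary {m n r : ℕ} (Ω : Finset (Fin m × Fin n))
    (X : Matrix (Fin m) (Fin n) ℝ) (lam : ℝ) (hlam : 0 < lam)
    (A : Matrix (Fin m) (Fin r) ℝ) (B : Matrix (Fin n) (Fin r) ℝ)
    (hA : ∀ Z₁ : Matrix (Fin m) (Fin r) ℝ, QA Ω X lam A A B ≤ QA Ω X lam Z₁ A B)
    (hB : ∀ Z₂ : Matrix (Fin n) (Fin r) ℝ, QB Ω X lam B A B ≤ QB Ω X lam Z₂ A B) :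
    proj Ω (A * Bᵀ - X) * B + lam • A = 0 ∧
    Aᵀ * proj Ω (A * Bᵀ - X) + lam • Bᵀ = 0 := by
  set R := proj Ω (X - A * Bᵀ) with hR
  have e0A : QA Ω X lam A A B = (1/2) * frobSq R + (lam/2) * frobSq A + (lam/2) * frobSq B := by
    rw [QA, sub_self, projPerp_zero, add_zero]
  have e0B : QB Ω X lam B A B = (1/2) * frobSq R + (lam/2) * frobSq A + (lam/2) * frobSq B := by
    rw [QB, sub_self, projPerp_zero, add_zero]
  -- A side
  have hRB : R * B = lam • A := by
    apply eq_of_frInner_eq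
    intro D
    set a := (1/2) * frobSq (D * Bᵀ) + (lam/2) * frobSq D with ha_def
    set b := lam * frInner A D - frInner R (D * Bᵀ) with hb_def
    have hq : ∀ t : ℝ, 0 ≤ a * t ^ 2 + b * t := by
      intro t
      have h0 := hA (A + t • D)
      have hmul : (A + t • D) * Bᵀ = A * Bᵀ + t • (D * Bᵀ) := by
        rw [Matrix.add_mul, Matrix.smul_mul]
      have e1 : QA Ω X lam (A + t • D) A B =
          (1/2) * frobSq (R + (-t) • (D * Bᵀ)) + (lam/2) * frobSq (A + t • D)
            + (lam/2) * frobSq B := by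
        rw [QA, hmul]
        have h2 : X - (A * Bᵀ + t • (D * Bᵀ)) = (X - A * Bᵀ) - t • (D * Bᵀ) := by abel
        have h3 : A * Bᵀ - (A * Bᵀ + t • (D * Bᵀ)) = -(t • (D * Bᵀ)) := by abel
        rw [h2, h3, resid_shift]
      rw [e1, e0A, frobSq_add_smul, frobSq_add_smul] at h0
      have : a * t ^ 2 + b * t =
          ((1/2) * (frobSq R + 2 * (-t) * frInner R (D * Bᵀ) + (-t) ^ 2 * frobSq (D * Bᵀ))
            + (lam/2) * (frobSq A + 2 * t * frInner A D + t ^ 2 * frobSq D)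
            + (lam/2) * frobSq B)
          - ((1/2) * frobSq R + (lam/2) * frobSq A + (lam/2) * frobSq B) := by
        rw [ha_def, hb_def]; ring
      rw [this]; linarith
    have ha : 0 ≤ a := by
      have h1 := frobSq_nonneg (D * Bᵀ)
      have h2 := frobSq_nonneg D
      rw [ha_def]; nlinarith
    have hb0 := quad_coeff a b ha hq
    rw [hb_def] at hb0
    rw [← frInner_mul_right, frInner_smul_left]
    linarith
  -- B side
  have hRtA : Rᵀ * A = lam • B := by
    apply eq_of_frInner_eq
    intro D
    set a := (1/2) * frobSq (A * Dᵀ) + (lam/2) * frobSq D with ha_def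
    set b := lam * frInner B D - frInner R (A * Dᵀ) with hb_def
    have hq : ∀ t : ℝ, 0 ≤ a * t ^ 2 + b * t := by
      intro t
      have h0 := hB (B + t • D)
      have hmul : A * (B + t • D)ᵀ = A * Bᵀ + t • (A * Dᵀ) := by
        rw [Matrix.transpose_add, Matrix.transpose_smul, Matrix.mul_add, Matrix.mul_smul]
      have e1 : QB Ω X lam (B + t • D) A B =
          (1/2) * frobSq (R + (-t) • (A * Dᵀ)) + (lam/2) * frobSq A
            + (lam/2) * frobSq (B + t • D) := by
        rw [QB, hmul]
        have h2 : X - (A * Bᵀ + t • (A * Dᵀ)) = (X - A * Bᵀ) - t • (A * Dᵀ) := by abel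
        have h3 : A * Bᵀ - (A * Bᵀ + t • (A * Dᵀ)) = -(t • (A * Dᵀ)) := by abel
        rw [h2, h3, resid_shift]
      rw [e1, e0B, frobSq_add_smul, frobSq_add_smul] at h0
      have : a * t ^ 2 + b * t =
          ((1/2) * (frobSq R + 2 * (-t) * frInner R (A * Dᵀ) + (-t) ^ 2 * frobSq (A * Dᵀ))
            + (lam/2) * frobSq A
            + (lam/2) * (frobSq B + 2 * t * frInner B D + t ^ 2 * frobSq D))
          - ((1/2) * frobSq R + (lam/2) * frobSq A + (lam/2) * frobSq B) := by
        rw [ha_def, hb_def]; ring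
      rw [this]; linarith
    have ha : 0 ≤ a := by
      have h1 := frobSq_nonneg (A * Dᵀ)
      have h2 := frobSq_nonneg D
      rw [ha_def]; nlinarith
    have hb0 := quad_coeff a b ha hq
    rw [hb_def] at hb0
    rw [← frInner_mul_left, frInner_smul_left]
    linarith
  have hneg : proj Ω (A * Bᵀ - X) = -R := by
    rw [hR, ← proj_neg, neg_sub]
  constructor
  · rw [hneg, Matrix.neg_mul, hRB]
    simp
  · rw [hneg, Matrix.mul_neg]
    have : Aᵀ * R = lam • Bᵀ := by
      have := congrArg Matrix.transpose hRtA
      rwa [Matrix.transpose_mul, Matrix.transpose_transpose, Matrix.transpose_smul] at this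
    rw [this]
    simp


end
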